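/- For n ≥ 1, the number of Dyck n-paths with exactly one return and interior (path with first and last step removed) having terminal descent of even length equals the number of early-hill-free Dyck n-paths ending in UD. -/

import Mathlib

inductive Step : Type
  | U : Step
  | D : Step
deriving DecidableEq

open Step

/-- The path stays weakly above ground level: every prefix has at least as many `U`s as `D`s. -/
def NonnegPrefixes (p : List Step) : Prop :=
  ∀ q : List Step, q <+: p → q.count D ≤ q.count U

/-- A Dyck path: equally many upsteps and downsteps, never dipping below ground level. -/
def IsDyck (p : List Step) : Prop :=
  p.count U = p.count D ∧ NonnegPrefixes p

/-- A Dyck `n`-path: a Dyck path with `n` upsteps (semilength `n`). -/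
def IsDyckN (n : ℕ) (p : List Step) : Prop :=
  IsDyck p ∧ p.count U = n

/-- Length of the terminal descent (maximal final run of downsteps). -/
def termDesc (p : List Step) : ℕ :=
  (p.reverse.takeWhile (fun s => s == D)).length

/-- Number of returns: downsteps that bring the path back to ground level. -/
def returnCount (p : List Step) : ℕ :=
  ((List.range p.length).filter
    (fun i => (p.take (i+1)).count U == (p.take (i+1)).count D)).length

/-- `GroundDescent p q m r` : `p = q ++ D^m ++ r` is a maximal run of `m ≥ 1` downsteps
ending at ground level. -/
def GroundDescent (p q : List Step) (m : ℕ) (r : List Step) : Prop :=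
  p = q ++ List.replicate m D ++ r ∧ 1 ≤ m ∧
  q.getLast? ≠ some D ∧ r.head? ≠ some D ∧
  q.count U = q.count D + m

/-- All descents to ground level other than the terminal one have odd length. -/
def OddNonterminalGroundDescents (p : List Step) : Prop :=
  ∀ q m r, GroundDescent p q m r → r ≠ [] → Odd m

/-- No occurrence of `UD` starting at ground level. -/
def HillFree (p : List Step) : Prop :=
  ∀ q r : List Step, p = q ++ [U, D] ++ r → q.count U ≠ q.count D

/-- No occurrence of `UDU` starting at ground level. -/
def EarlyHillFree (p : List Step) : Prop :=
  ∀ q r : List Step, p = q ++ [U, D, U] ++ r → q.count U ≠ q.count D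

/-- Number of early hills: occurrences of `UDU` starting at ground level. -/
def earlyHillCount (p : List Step) : ℕ :=
  ((List.range p.length).filter
    (fun i => decide ((p.take i).count U = (p.take i).count D ∧
      (p.drop i).take 3 = [U, D, U]))).length

/-!
Reading `U` as entering and `D` as leaving a node identifies Dyck paths with plane forests.
A path with one return is a single tree `node g`, its interior is the path of `g`, and the
terminal descent of a forest's path is the length of its rightmost branch. An early-hill-free
path ending in `UD` is a forest without leaf trees followed by a leaf. Finally, `regraft` is a
size-preserving bijection from leaf-free forests onto forests whose rightmost branch has even
length: each step of its recursion lengthens the rightmost branch by two.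
-/

theorem List.prefix_append_iff {α : Type*} {l a b : List α} :
    l <+: a ++ b ↔ l <+: a ∨ ∃ c, c <+: b ∧ l = a ++ c := by
  refine ⟨fun h => ?_, ?_⟩
  · rcases le_or_gt l.length a.length with hl | hl
    · exact .inl (List.prefix_of_prefix_length_le h (a.prefix_append b) hl)
    · obtain ⟨c, rfl⟩ := List.prefix_of_prefix_length_le (a.prefix_append b) h hl.le
      exact .inr ⟨c, (List.prefix_append_right_inj a).1 h, rfl⟩
  · rintro (h | ⟨c, hc, rfl⟩)
    · exact h.trans (a.prefix_append b)
    · exact (List.prefix_append_right_inj a).2 hc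

theorem Nat.card_subtype_eq_of_injOn {α β : Type*} {P : α → Prop} {Q : β → Prop}
    (f : α → β) (hf : Set.InjOn f {a | P a}) (hPQ : ∀ b, Q b ↔ ∃ a, P a ∧ f a = b) :
    Nat.card {b // Q b} = Nat.card {a // P a} := by
  have himage : {b | Q b} = f '' {a | P a} := Set.ext hPQ
  exact (congrArg (fun s : Set β => Nat.card s) himage).trans (Nat.card_image_of_injOn hf)

theorem isDyck_nil : IsDyck [] :=
  ⟨rfl, fun q hq => by simp [List.prefix_nil.1 hq]⟩

theorem IsDyck.append {a b : List Step} (ha : IsDyck a) (hb : IsDyck b) : IsDyck (a ++ b) := by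
  refine ⟨by simp [ha.1, hb.1], fun q hq => ?_⟩
  rcases List.prefix_append_iff.1 hq with hq | ⟨c, hc, rfl⟩
  · exact ha.2 q hq
  · have := hb.2 c hc
    simp only [List.count_append, ha.1]
    omega

theorem IsDyck.nest {a : List Step} (ha : IsDyck a) : IsDyck (U :: (a ++ [D])) := by
  refine ⟨by simp [ha.1], fun q hq => ?_⟩
  rcases List.prefix_cons_iff.1 hq with rfl | ⟨t, rfl, ht⟩
  · simp
  rcases List.prefix_concat_iff.1 ht with rfl | ht
  · simp [ha.1]
  · have := ha.2 t ht
    simp only [List.count_cons_self, List.count_cons_of_ne (by decide : U ≠ D)]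
    omega

theorem IsDyck.of_append {a b : List Step} (h : IsDyck (a ++ b)) (ha : a.count U = a.count D) :
    IsDyck a ∧ IsDyck b := by
  refine ⟨⟨ha, fun q hq => h.2 q (hq.trans (a.prefix_append b))⟩, ?_, fun t ht => ?_⟩
  · have := h.1
    simp only [List.count_append] at this
    omega
  · have := h.2 (a ++ t) ((List.prefix_append_right_inj a).2 ht)
    simp only [List.count_append] at this
    omega

theorem IsDyck.eq_of_append_D_eq {a b x y : List Step} (ha : IsDyck a) (hb : IsDyck b)
    (h : a ++ D :: x = b ++ D :: y) : a = b := by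
  wlog hab : a <+: b generalizing a b x y
  · have hprefix := List.prefix_or_prefix_of_prefix (a.prefix_append _) (h ▸ b.prefix_append _)
    exact (this hb ha h.symm (hprefix.resolve_left hab)).symm
  obtain ⟨_ | ⟨z, t⟩, rfl⟩ := hab
  · simp
  obtain ⟨rfl, -⟩ : z = D ∧ _ := by simpa using h.symm
  have := hb.2 (a ++ [D]) (by simp)
  simp [ha.1] at this

theorem IsDyck.exists_eq_append_D_append {p : List Step} (h : IsDyck (U :: p)) :
    ∃ a b, p = a ++ D :: b ∧ IsDyck a ∧ IsDyck b := by
  classical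
  -- `p.take (k + 1)` is the shortest prefix of `p` ending below ground, so `p = a ++ D :: b`
  -- with `a := p.take k` is the first return of `U :: p`.
  have hex : ∃ i, (p.take i).count U < (p.take i).count D :=
    ⟨p.length, Nat.lt_of_succ_le (by simpa [List.count_cons] using h.1.le)⟩
  obtain ⟨k, hk⟩ : ∃ k, Nat.find hex = k + 1 :=
    Nat.exists_eq_add_one.2 (Nat.pos_of_ne_zero fun h0 => by simpa [h0] using Nat.find_spec hex)
  have hmin : ∀ s, s <+: p → s.length ≤ k → s.count D ≤ s.count U := fun s hs hlen => by
    rw [List.prefix_iff_eq_take.1 hs]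
    exact not_lt.1 (Nat.find_min hex (by omega))
  have hklt : k < p.length := by
    by_contra hle
    have := Nat.find_spec hex
    rw [hk, List.take_of_length_le (by omega)] at this
    exact absurd (hmin p (List.prefix_refl p) (by omega)) (not_le.2 this)
  have hfirst := Nat.find_spec hex
  rw [hk, List.take_add_one, List.getElem?_eq_getElem hklt] at hfirst
  set a := p.take k
  have hsplit : p = a ++ p[k] :: p.drop (k + 1) := by simp [a]
  have ha : a.count D ≤ a.count U := hmin a (List.take_prefix k p) (by simp [a])
  obtain ⟨hD, hbal⟩ : p[k] = D ∧ a.count U = a.count D := by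
    cases hstep : p[k] <;> simp [hstep] at hfirst ⊢ <;> omega
  rw [hD] at hsplit
  have hb : IsDyck (p.drop (k + 1)) := by
    have h' : IsDyck ((U :: (a ++ [D])) ++ p.drop (k + 1)) := by
      rw [hsplit] at h
      simpa using h
    exact (h'.of_append (by simp [hbal])).2
  refine ⟨a, p.drop (k + 1), hsplit, ⟨hbal, fun s hs => ?_⟩, hb⟩
  exact hmin s (hs.trans (List.take_prefix k p)) (hs.length_le.trans (by simp [a]))

theorem returnCount_eq_countP (p : List Step) :
    returnCount p = p.inits.tail.countP (fun q => q.count U == q.count D) := by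
  have hinits : (List.range p.length).map (fun i => p.take (i + 1)) = p.inits.tail := by
    refine List.ext_getElem (by simp) fun i _ _ => ?_
    simp [List.getElem_tail]
  rw [returnCount, ← List.countP_eq_length_filter, ← hinits, List.countP_map]
  rfl

theorem returnCount_append {s : List Step} (hs : s.count U = s.count D) (t : List Step) :
    returnCount (s ++ t) = returnCount s + returnCount t := by
  simp only [returnCount_eq_countP, List.inits_append]
  rw [List.tail_append_of_ne_nil (by cases s <;> simp), List.countP_append, List.countP_map]
  congr 1
  refine List.countP_congr fun q _ => ?_
  simp [List.count_append, hs]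

theorem IsDyck.returnCount_nest {a : List Step} (ha : IsDyck a) :
    returnCount (U :: (a ++ [D])) = 1 := by
  have hbelow (q : List Step) (hq : q <+: a) : q.count U + 1 ≠ q.count D := by
    have := ha.2 q hq
    omega
  simpa [returnCount_eq_countP, Function.comp_def, ha.1] using hbelow

theorem termDesc_append_D (l : List Step) : termDesc (l ++ [D]) = termDesc l + 1 := by
  simp [termDesc]

theorem termDesc_append_U_cons (a b : List Step) : termDesc (a ++ U :: b) = termDesc b := by
  simp only [termDesc, List.reverse_append, List.reverse_cons, List.append_assoc,
    List.takeWhile_append]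
  split_ifs with h <;> simp_all

theorem termDesc_U_cons (b : List Step) : termDesc (U :: b) = termDesc b :=
  termDesc_append_U_cons [] b

inductive PlaneTree : Type
  | node : List PlaneTree → PlaneTree

namespace PlaneTree

def toPath : List PlaneTree → List Step
  | [] => []
  | node g :: F => U :: (toPath g ++ D :: toPath F)

@[simp] theorem toPath_nil : toPath [] = [] := by rw [toPath]

@[simp] theorem toPath_cons (g F : List PlaneTree) :
    toPath (node g :: F) = U :: (toPath g ++ D :: toPath F) := by
  rw [toPath]

@[simp] theorem toPath_append (F G : List PlaneTree) : toPath (F ++ G) = toPath F ++ toPath G := by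
  induction F with
  | nil => simp
  | cons t F ih => cases t; simp [ih]

theorem toPath_singleton (g : List PlaneTree) : toPath [node g] = U :: (toPath g ++ [D]) := by
  simp

theorem isDyck_toPath : ∀ F : List PlaneTree, IsDyck (toPath F)
  | [] => toPath_nil ▸ isDyck_nil
  | node g :: F => by
    rw [← List.singleton_append, toPath_append, toPath_singleton]
    exact (isDyck_toPath g).nest.append (isDyck_toPath F)

theorem toPath_injective : Function.Injective toPath
  | [], [], _ => rfl
  | [], node _ :: _, h => by simp at h
  | node _ :: _, [], h => by simp at h
  | node g :: F, node g' :: F', h => by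
    simp only [toPath_cons, List.cons.injEq, true_and] at h
    have hg := (isDyck_toPath g).eq_of_append_D_eq (isDyck_toPath g') h
    rw [hg, List.append_cancel_left_eq, List.cons.injEq] at h
    rw [toPath_injective hg, toPath_injective h.2]

theorem exists_toPath_eq {p : List Step} (hp : IsDyck p) : ∃ F, toPath F = p := by
  induction hlen : p.length using Nat.strong_induction_on generalizing p with
  | _ n ih =>
  match p, hp with
  | [], _ => exact ⟨[], toPath_nil⟩
  | D :: _, hp => simpa using hp.2 [D] (by simp)
  | U :: p, hp =>
    obtain ⟨a, b, rfl, ha, hb⟩ := hp.exists_eq_append_D_append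
    obtain ⟨g, rfl⟩ := ih a.length (by simp [← hlen]) ha rfl
    obtain ⟨F, rfl⟩ := ih b.length (by simp [← hlen]; omega) hb rfl
    exact ⟨node g :: F, toPath_cons g F⟩

theorem exists_append_of_toPath_eq_append {F : List PlaneTree} {q r : List Step}
    (h : toPath F = q ++ r) (hq : q.count U = q.count D) :
    ∃ F₁ F₂, F = F₁ ++ F₂ ∧ toPath F₁ = q ∧ toPath F₂ = r := by
  obtain ⟨hq, hr⟩ := (h ▸ isDyck_toPath F).of_append hq
  obtain ⟨F₁, rfl⟩ := exists_toPath_eq hq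
  obtain ⟨F₂, rfl⟩ := exists_toPath_eq hr
  exact ⟨F₁, F₂, toPath_injective (by simp [h]), rfl, rfl⟩

theorem returnCount_toPath : ∀ F : List PlaneTree, returnCount (toPath F) = F.length
  | [] => by simp [returnCount]
  | node g :: F => by
    rw [← List.singleton_append, toPath_append, toPath_singleton,
      returnCount_append (isDyck_toPath g).nest.1, (isDyck_toPath g).returnCount_nest,
      returnCount_toPath F, List.length_append, List.length_singleton, add_comm]

theorem exists_toPath_eq_U_cons {F : List PlaneTree} (hF : F ≠ []) :
    ∃ r, toPath F = U :: r := by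
  obtain ⟨⟨g⟩, F, rfl⟩ := List.exists_cons_of_ne_nil hF
  exact ⟨_, toPath_cons g F⟩

def rightBranchLength : List PlaneTree → ℕ
  | [] => 0
  | [node g] => rightBranchLength g + 1
  | _ :: t :: F => rightBranchLength (t :: F)

theorem termDesc_toPath (F : List PlaneTree) : termDesc (toPath F) = rightBranchLength F := by
  induction F using rightBranchLength.induct with
  | case1 => simp [termDesc, rightBranchLength]
  | case2 g ih =>
    rw [toPath_singleton, termDesc_U_cons, termDesc_append_D, ih, rightBranchLength]
  | case3 t t' F ih =>
    obtain ⟨g⟩ := t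
    obtain ⟨r, hr⟩ := exists_toPath_eq_U_cons (List.cons_ne_nil t' F)
    rw [rightBranchLength, ← ih, toPath_cons, hr, termDesc_U_cons, termDesc_U_cons]
    simpa using termDesc_append_U_cons (toPath g ++ [D]) r

theorem earlyHillFree_toPath_append_leaf_iff (G : List PlaneTree) :
    EarlyHillFree (toPath (G ++ [node []])) ↔ node [] ∉ G := by
  constructor
  · intro h hG
    obtain ⟨s, t, rfl⟩ := List.append_of_mem hG
    obtain ⟨r, hr⟩ := exists_toPath_eq_U_cons (List.append_ne_nil_of_right_ne_nil t
      (List.cons_ne_nil (node []) []))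
    refine h (toPath s) r ?_ (isDyck_toPath s).1
    rw [List.append_cons s, List.append_assoc, toPath_append, toPath_append, hr]
    simp
  · intro hG q r hqr hq
    obtain ⟨F₁, F₂, hsplit, -, hF₂⟩ :=
      exists_append_of_toPath_eq_append (hqr.trans (List.append_assoc _ _ _)) hq
    obtain ⟨⟨g⟩, F₃, rfl⟩ := List.exists_cons_of_ne_nil
      (show F₂ ≠ [] by rintro rfl; simp at hF₂)
    obtain rfl : g = [] := by
      by_contra hg
      obtain ⟨r', hr'⟩ := exists_toPath_eq_U_cons hg
      simp [hr'] at hF₂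
    have hF₃ : F₃ ≠ [] := by rintro rfl; simp at hF₂
    have hG' := congrArg List.dropLast hsplit
    rw [List.dropLast_concat, List.dropLast_append_of_ne_nil (List.cons_ne_nil _ _),
      List.dropLast_cons_of_ne_nil hF₃] at hG'
    exact hG (by simp [hG'])

def children : PlaneTree → List PlaneTree
  | node c => c

-- Only leaf-free forests matter, so the value of a leading leaf is immaterial.
def regraft : List PlaneTree → List PlaneTree
  | [] => []
  | node c :: G => c.dropLast ++ [node ((c.getLastD (node [])).children ++ [node (regraft G)])]

@[simp] theorem regraft_nil : regraft [] = [] := by rw [regraft]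

theorem regraft_cons (x a G : List PlaneTree) :
    regraft (node (x ++ [node a]) :: G) = x ++ [node (a ++ [node (regraft G)])] := by
  simp [regraft, children]

theorem eq_nil_or_eq_append_node (F : List PlaneTree) : F = [] ∨ ∃ x a, F = x ++ [node a] := by
  rcases F.eq_nil_or_concat with rfl | ⟨x, ⟨a⟩, rfl⟩
  · exact .inl rfl
  · exact .inr ⟨x, a, List.concat_eq_append⟩

theorem exists_eq_node_append_cons_of_leaf_notMem {t : PlaneTree} {G : List PlaneTree}
    (h : node [] ∉ t :: G) : ∃ x a, t = node (x ++ [node a]) ∧ node [] ∉ G := by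
  obtain ⟨c⟩ := t
  simp only [List.mem_cons, not_or] at h
  rcases eq_nil_or_eq_append_node c with rfl | ⟨x, a, rfl⟩
  · exact absurd rfl h.1
  · exact ⟨x, a, rfl, h.2⟩

theorem rightBranchLength_append_node (x a : List PlaneTree) :
    rightBranchLength (x ++ [node a]) = rightBranchLength a + 1 := by
  induction x using rightBranchLength.induct with
  | case1 => simp [rightBranchLength]
  | case2 g _ => simp [rightBranchLength]
  | case3 t t' F ih => simpa [rightBranchLength] using ih

theorem count_U_toPath_regraft {G : List PlaneTree} (hG : node [] ∉ G) :
    (toPath (regraft G)).count U = (toPath G).count U := by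
  induction G with
  | nil => simp
  | cons t G ih =>
    obtain ⟨x, a, rfl, hrest⟩ := exists_eq_node_append_cons_of_leaf_notMem hG
    simp only [regraft_cons, toPath_append, toPath_cons, toPath_nil, List.count_append,
      List.count_cons_self, List.count_cons_of_ne (by decide : D ≠ U), List.count_nil, ih hrest]
    omega

theorem even_rightBranchLength_regraft {G : List PlaneTree} (hG : node [] ∉ G) :
    Even (rightBranchLength (regraft G)) := by
  induction G with
  | nil => simp [rightBranchLength]
  | cons t G ih =>
    obtain ⟨x, a, rfl, hrest⟩ := exists_eq_node_append_cons_of_leaf_notMem hG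
    rw [regraft_cons, rightBranchLength_append_node, rightBranchLength_append_node]
    exact (ih hrest).add_one.add_one

theorem regraft_injOn : Set.InjOn regraft {G | node [] ∉ G} := by
  intro G hG G' hG' h
  induction G generalizing G' with
  | nil =>
    rcases G' with _ | ⟨t', G'⟩
    · rfl
    obtain ⟨x', a', rfl, -⟩ := exists_eq_node_append_cons_of_leaf_notMem hG'
    simp [regraft_cons] at h
  | cons t G ih =>
    obtain ⟨x, a, rfl, hrest⟩ := exists_eq_node_append_cons_of_leaf_notMem hG
    rcases G' with _ | ⟨t', G'⟩
    · simp [regraft_cons] at h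
    obtain ⟨x', a', rfl, hrest'⟩ := exists_eq_node_append_cons_of_leaf_notMem hG'
    rw [regraft_cons, regraft_cons] at h
    obtain ⟨rfl, hlast⟩ := List.append_inj' h rfl
    simp only [List.cons.injEq, node.injEq, and_true] at hlast
    obtain ⟨rfl, hgraft⟩ := List.append_inj' hlast rfl
    simp only [List.cons.injEq, node.injEq, and_true] at hgraft
    rw [ih hrest hrest' hgraft]

theorem exists_regraft_eq (k : ℕ) {F : List PlaneTree} (hF : rightBranchLength F = 2 * k) :
    ∃ G, node [] ∉ G ∧ regraft G = F := by
  induction k generalizing F with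
  | zero =>
    rcases eq_nil_or_eq_append_node F with rfl | ⟨x, a, rfl⟩
    · exact ⟨[], by simp⟩
    · simp [rightBranchLength_append_node] at hF
  | succ k ih =>
    rcases eq_nil_or_eq_append_node F with rfl | ⟨x, c, rfl⟩
    · simp [rightBranchLength] at hF
    rcases eq_nil_or_eq_append_node c with rfl | ⟨y, b, rfl⟩
    · simp only [rightBranchLength_append_node, rightBranchLength] at hF
      omega
    rw [rightBranchLength_append_node, rightBranchLength_append_node] at hF
    obtain ⟨G, hG, rfl⟩ := ih (show rightBranchLength b = 2 * k by omega)
    exact ⟨node (x ++ [node y]) :: G, by simpa using hG, regraft_cons x y G⟩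

theorem oneReturn_iff_exists_toPath_singleton (n : ℕ) (p : List Step) :
    (IsDyckN n p ∧ returnCount p = 1 ∧ Even (termDesc p.dropLast.tail)) ↔
      ∃ g, ((toPath g).count U + 1 = n ∧ Even (rightBranchLength g)) ∧
        toPath [node g] = p := by
  have hinterior (g : List PlaneTree) : (toPath [node g]).dropLast.tail = toPath g := by
    rw [toPath_singleton, ← List.cons_append, List.dropLast_concat, List.tail_cons]
  constructor
  · rintro ⟨⟨hp, rfl⟩, hret, hev⟩
    obtain ⟨F, rfl⟩ := exists_toPath_eq hp
    rw [returnCount_toPath, List.length_eq_one_iff] at hret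
    obtain ⟨⟨g⟩, rfl⟩ := hret
    rw [hinterior, termDesc_toPath] at hev
    exact ⟨g, ⟨by simp, hev⟩, rfl⟩
  · rintro ⟨g, ⟨rfl, hev⟩, rfl⟩
    refine ⟨⟨isDyck_toPath _, by simp⟩, returnCount_toPath [node g], ?_⟩
    rwa [hinterior, termDesc_toPath]

theorem evenRightBranch_iff_exists_regraft (n : ℕ) (F : List PlaneTree) :
    ((toPath F).count U + 1 = n ∧ Even (rightBranchLength F)) ↔
      ∃ G, ((toPath G).count U + 1 = n ∧ node [] ∉ G) ∧ regraft G = F := by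
  constructor
  · rintro ⟨rfl, k, hk⟩
    obtain ⟨G, hG, rfl⟩ := exists_regraft_eq k (hk.trans (two_mul k).symm)
    exact ⟨G, ⟨by rw [count_U_toPath_regraft hG], hG⟩, rfl⟩
  · rintro ⟨G, ⟨rfl, hG⟩, rfl⟩
    exact ⟨by rw [count_U_toPath_regraft hG], even_rightBranchLength_regraft hG⟩

theorem earlyHillFree_endsWithUD_iff_exists_toPath (n : ℕ) (p : List Step) :
    (IsDyckN n p ∧ EarlyHillFree p ∧ ∃ q, p = q ++ [U, D]) ↔
      ∃ G, ((toPath G).count U + 1 = n ∧ node [] ∉ G) ∧ toPath (G ++ [node []]) = p := by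
  constructor
  · rintro ⟨⟨hp, rfl⟩, hehf, q, rfl⟩
    have hq : q.count U = q.count D := by
      have := hp.1
      simp only [List.count_append] at this
      simpa using this
    obtain ⟨G, rfl⟩ := exists_toPath_eq (hp.of_append hq).1
    have hpath : toPath (G ++ [node []]) = toPath G ++ [U, D] := by simp
    rw [← hpath, earlyHillFree_toPath_append_leaf_iff] at hehf
    exact ⟨G, ⟨by simp, hehf⟩, hpath⟩
  · rintro ⟨G, ⟨rfl, hG⟩, rfl⟩
    exact ⟨⟨isDyck_toPath _, by simp⟩, (earlyHillFree_toPath_append_leaf_iff G).2 hG,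
      toPath G, by simp⟩

end PlaneTree

open PlaneTree

theorem stmt7_general (n : ℕ) :
    Nat.card {p : List Step // IsDyckN n p ∧ returnCount p = 1 ∧
      Even (termDesc p.dropLast.tail)} =
    Nat.card {p : List Step // IsDyckN n p ∧ EarlyHillFree p ∧
      ∃ q : List Step, p = q ++ [U, D]} := by
  have hnode : Function.Injective fun g : List PlaneTree => [node g] := fun g g' h => by
    simpa using h
  calc _ = Nat.card {g // (toPath g).count U + 1 = n ∧ Even (rightBranchLength g)} :=
        Nat.card_subtype_eq_of_injOn _ (toPath_injective.comp hnode).injOn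
          (oneReturn_iff_exists_toPath_singleton n)
    _ = Nat.card {G // (toPath G).count U + 1 = n ∧ node [] ∉ G} :=
        Nat.card_subtype_eq_of_injOn _ (regraft_injOn.mono fun _ hG => hG.2)
          (evenRightBranch_iff_exists_regraft n)
    _ = _ := (Nat.card_subtype_eq_of_injOn _
        (toPath_injective.comp (List.append_left_injective _)).injOn
        (earlyHillFree_endsWithUD_iff_exists_toPath n)).symm

/-- For `n ≥ 1`, Dyck `n`-paths with exactly one return whose interior has terminal descent
of even length are equinumerous with early-hill-free Dyck `n`-paths ending in `UD`. -/
theorem stmt7 (n : ℕ) (hn : 1 ≤ n) :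
    Nat.card {p : List Step // IsDyckN n p ∧ returnCount p = 1 ∧
      Even (termDesc p.dropLast.tail)} =
    Nat.card {p : List Step // IsDyckN n p ∧ EarlyHillFree p ∧
      ∃ q : List Step, p = q ++ [U, D]} :=
  stmt7_general n
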